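/- Let q* > 1 and define F : ℝ → ℝ by F(p) = h_{q*}^{-1}(h_{q*}(p) + p) − p, where h_{q*}(p) = p + |p|^{q*−1}·sgn(p). If 1 < q* ≤ 3, then F is monotonically increasing on ℝ. -/

import Mathlib

/-!
With `a = q* - 1`, write `h p = p + signedRpow a p` and `u = h⁻¹ (h p + p)`. Away from `p = 0`,
`F' p = (h' p + 1) / h' u - 1`, so `F` is monotone as soon as `h' u ≤ h' p + 1`, i.e.
`a |u| ^ (a - 1) ≤ a |p| ^ (a - 1) + 1`; at `p = 0`, where `h` need not be differentiable,
continuity of `F` suffices. By oddness take `p > 0`, so `u > p`. For `a ≤ 1` the claim follows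
from `u ^ (a - 1) ≤ p ^ (a - 1)`. For `1 < a ≤ 2`, convexity of `t ^ a` applied to
`u + u ^ a = 2 p + p ^ a` gives `(u - p) (1 + a p ^ (a - 1)) ≤ p`, and concavity of `t ^ (a - 1)`
gives `u ^ (a - 1) - p ^ (a - 1) ≤ (a - 1) p ^ (a - 2) (u - p)`; together with `a - 1 ≤ 1` these
yield the claim.
-/

open Real Function Set Filter

noncomputable def signedRpow (a p : ℝ) : ℝ := |p| ^ a * Real.sign p

section Rpow

variable {a p u : ℝ}

lemma tangent_le_rpow_of_one_le (ha : 1 ≤ a) (hp : 0 < p) (hu : 0 ≤ u) :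
    p ^ a + a * p ^ (a - 1) * (u - p) ≤ u ^ a := by
  have h := one_add_mul_self_le_rpow_one_add
    (by linarith [div_nonneg hu hp.le] : -1 ≤ u / p - 1) ha
  rw [add_sub_cancel, div_rpow hu hp.le, le_div_iff₀ (rpow_pos_of_pos hp a)] at h
  refine (le_of_eq ?_).trans h
  rw [rpow_sub_one hp.ne']
  field_simp

lemma rpow_le_tangent_of_le_one (ha₀ : 0 ≤ a) (ha₁ : a ≤ 1) (hp : 0 < p) (hu : 0 ≤ u) :
    u ^ a ≤ p ^ a + a * p ^ (a - 1) * (u - p) := by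
  have h := rpow_one_add_le_one_add_mul_self
    (by linarith [div_nonneg hu hp.le] : -1 ≤ u / p - 1) ha₀ ha₁
  rw [add_sub_cancel, div_rpow hu hp.le, div_le_iff₀ (rpow_pos_of_pos hp a)] at h
  refine h.trans (le_of_eq ?_)
  rw [rpow_sub_one hp.ne']
  field_simp

lemma mul_rpow_sub_one_le_of_add_rpow_eq (ha₀ : 0 ≤ a) (ha₂ : a ≤ 2) (hp : 0 < p)
    (hu : 0 ≤ u) (h : u + u ^ a = 2 * p + p ^ a) : a * u ^ (a - 1) ≤ a * p ^ (a - 1) + 1 := by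
  have hpu : p ≤ u := by
    by_contra! hup
    linarith [rpow_le_rpow hu hup.le ha₀]
  have hP : 0 < p ^ (a - 1) := rpow_pos_of_pos hp _
  rcases le_or_gt a 1 with ha₁ | ha₁
  · have := rpow_le_rpow_of_nonpos hp hpu (by linarith : a - 1 ≤ 0)
    nlinarith [mul_le_mul_of_nonneg_left this ha₀]
  have hstep : (u - p) * (1 + a * p ^ (a - 1)) ≤ p := by
    nlinarith [tangent_le_rpow_of_one_le ha₁.le hp hu]
  have hconc := rpow_le_tangent_of_le_one (by linarith) (by linarith) hp hu (a := a - 1)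
  rw [rpow_sub_one hp.ne' (a - 1)] at hconc
  have hsmall : (a - 1) * (a * p ^ (a - 1)) * (u - p) ≤ p := by
    nlinarith [mul_nonneg (mul_nonneg ha₀ hP.le) (sub_nonneg.2 hpu)]
  calc a * u ^ (a - 1)
      ≤ a * (p ^ (a - 1) + (a - 1) * (p ^ (a - 1) / p) * (u - p)) :=
        mul_le_mul_of_nonneg_left hconc ha₀
    _ = a * p ^ (a - 1) + (a - 1) * (a * p ^ (a - 1)) * (u - p) / p := by ring
    _ ≤ a * p ^ (a - 1) + 1 := by
        gcongr
        exact (div_le_one hp).2 hsmall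

end Rpow

section SignedRpow

variable {a : ℝ}

lemma signedRpow_neg (a p : ℝ) : signedRpow a (-p) = -signedRpow a p := by
  simp [signedRpow, Real.sign_neg]

lemma signedRpow_zero (a : ℝ) : signedRpow a 0 = 0 := by
  simp [signedRpow]

lemma signedRpow_of_pos {p : ℝ} (hp : 0 < p) : signedRpow a p = p ^ a := by
  simp [signedRpow, abs_of_pos hp, Real.sign_of_pos hp]

lemma signedRpow_nonpos {p : ℝ} (hp : p ≤ 0) : signedRpow a p ≤ 0 := by
  rcases hp.lt_or_eq with hp | rfl
  · simpa [signedRpow, Real.sign_of_neg hp] using rpow_nonneg (abs_nonneg p) a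
  · rw [signedRpow_zero]

lemma signedRpow_eq_max_rpow_sub (ha : a ≠ 0) (p : ℝ) :
    signedRpow a p = max p 0 ^ a - max (-p) 0 ^ a := by
  rcases lt_trichotomy p 0 with hp | rfl | hp
  · rw [← neg_neg p, signedRpow_neg, signedRpow_of_pos (neg_pos.2 hp), neg_neg,
      max_eq_right hp.le, max_eq_left (neg_pos.2 hp).le, zero_rpow ha, zero_sub]
  · simp [signedRpow_zero]
  · rw [signedRpow_of_pos hp, max_eq_left hp.le, max_eq_right (neg_neg_of_pos hp).le,
      zero_rpow ha, sub_zero]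

lemma continuous_signedRpow (ha : 0 < a) : Continuous (signedRpow a) := by
  simp_rw [funext (signedRpow_eq_max_rpow_sub ha.ne')]
  exact ((continuous_id.max continuous_const).rpow_const fun _ => Or.inr ha.le).sub
    ((continuous_neg.max continuous_const).rpow_const fun _ => Or.inr ha.le)

lemma monotone_signedRpow (ha : 0 < a) : Monotone (signedRpow a) := by
  intro x y hxy
  simp only [signedRpow_eq_max_rpow_sub ha.ne']
  gcongr

lemma hasDerivAt_signedRpow {p : ℝ} (hp : p ≠ 0) :
    HasDerivAt (signedRpow a) (a * |p| ^ (a - 1)) p := by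
  have hpos : ∀ {x : ℝ}, 0 < x → HasDerivAt (signedRpow a) (a * |x| ^ (a - 1)) x := by
    intro x hx
    rw [abs_of_pos hx]
    refine (hasDerivAt_rpow_const (Or.inl hx.ne')).congr_of_eventuallyEq ?_
    filter_upwards [Ioi_mem_nhds hx] with y hy using signedRpow_of_pos hy
  rcases hp.lt_or_gt with hp | hp
  · have hodd : signedRpow a = fun x => -signedRpow a (-x) := by
      funext x; rw [signedRpow_neg, neg_neg]
    rw [hodd]
    refine ((hpos (neg_pos.2 hp)).comp p (hasDerivAt_neg p)).neg.congr_deriv ?_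
    rw [abs_neg]; ring
  · exact hpos hp

lemma mul_abs_rpow_sub_one_le_of_add_signedRpow_eq (ha₀ : 0 < a) (ha₂ : a ≤ 2) {p u : ℝ}
    (hp : p ≠ 0) (h : u + signedRpow a u = p + signedRpow a p + p) :
    a * |u| ^ (a - 1) ≤ a * |p| ^ (a - 1) + 1 := by
  have hpos : ∀ {p u : ℝ}, 0 < p → u + signedRpow a u = p + signedRpow a p + p →
      a * |u| ^ (a - 1) ≤ a * |p| ^ (a - 1) + 1 := by
    intro p u hp h
    rw [signedRpow_of_pos hp] at h
    have hu : 0 < u := by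
      by_contra! hu
      linarith [signedRpow_nonpos (a := a) hu, rpow_pos_of_pos hp a]
    rw [signedRpow_of_pos hu] at h
    rw [abs_of_pos hp, abs_of_pos hu]
    exact mul_rpow_sub_one_le_of_add_rpow_eq ha₀.le ha₂ hp hu.le (by linarith)
  rcases hp.lt_or_gt with hp | hp
  · have h' : -u + signedRpow a (-u) = -p + signedRpow a (-p) + -p := by
      rw [signedRpow_neg, signedRpow_neg]; linarith
    simpa only [abs_neg] using hpos (neg_pos.2 hp) h'
  · exact hpos hp h

lemma strictMono_add_signedRpow (ha : 0 < a) : StrictMono fun p => p + signedRpow a p :=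
  strictMono_id.add_monotone (monotone_signedRpow ha)

lemma surjective_add_signedRpow (ha : 0 < a) : Surjective fun p => p + signedRpow a p := by
  have hzero := signedRpow_zero a
  refine (continuous_id.add (continuous_signedRpow ha)).surjective
    (tendsto_atTop_mono' _ ?_ tendsto_id) (tendsto_atBot_mono' _ ?_ tendsto_id)
  · filter_upwards [eventually_ge_atTop 0] with p hp
    dsimp only [Pi.add_apply, id]
    linarith [monotone_signedRpow ha hp]
  · filter_upwards [eventually_le_atBot 0] with p hp
    dsimp only [Pi.add_apply, id]
    linarith [monotone_signedRpow ha hp]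

end SignedRpow

lemma StrictMono.invFun_eq_orderIsoOfSurjective_symm {α β : Type*} [LinearOrder α] [Preorder β]
    [Nonempty α] {f : α → β} (hf : StrictMono f) (hs : Surjective f) :
    invFun f = (StrictMono.orderIsoOfSurjective f hf hs).symm :=
  funext fun y => hf.injective <| by
    rw [invFun_eq (hs y)]
    exact (StrictMono.orderIsoOfSurjective_self_symm_apply f hf hs y).symm

lemma monotone_of_hasDerivAt_nonneg_of_ne {f f' : ℝ → ℝ} {c : ℝ} (hf : Continuous f)
    (hf' : ∀ x ≠ c, HasDerivAt f (f' x) x) (hf'₀ : ∀ x ≠ c, 0 ≤ f' x) : Monotone f := by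
  have hmono : ∀ s, Convex ℝ s → c ∉ interior s → MonotoneOn f s := fun s hs hc =>
    monotoneOn_of_hasDerivWithinAt_nonneg hs hf.continuousOn
      (fun x hx => (hf' x (ne_of_mem_of_not_mem hx hc)).hasDerivWithinAt)
      (fun x hx => hf'₀ x (ne_of_mem_of_not_mem hx hc))
  exact (hmono _ (convex_Iic c) (by simp)).Iic_union_Ici (hmono _ (convex_Ici c) (by simp))

theorem OrderIso.monotone_symm_add_self_sub (e : ℝ ≃o ℝ) {e' : ℝ → ℝ} (he₀ : e 0 = 0)
    (he' : ∀ p ≠ 0, HasDerivAt e (e' p) p) (he'₀ : ∀ p ≠ 0, 0 < e' p)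
    (hle : ∀ p u, p ≠ 0 → e u = e p + p → e' u ≤ e' p + 1) :
    Monotone fun p => e.symm (e p + p) - p := by
  have hu : ∀ p ≠ 0, e.symm (e p + p) ≠ 0 := by
    intro p hp hzero
    have h := congrArg e hzero
    rw [e.apply_symm_apply, he₀] at h
    exact hp ((e.strictMono.add strictMono_id).injective (by simpa [he₀] using h))
  refine monotone_of_hasDerivAt_nonneg_of_ne (c := 0)
    (f' := fun p => (e' (e.symm (e p + p)))⁻¹ * (e' p + 1) - 1)
    ((e.symm.continuous.comp (e.continuous.add continuous_id)).sub continuous_id)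
    (fun p hp => ?_) (fun p hp => ?_)
  · have hsymm := HasDerivAt.of_local_left_inverse e.symm.continuous.continuousAt
      (he' _ (hu p hp)) (he'₀ _ (hu p hp)).ne' (Eventually.of_forall e.apply_symm_apply)
    exact (hsymm.comp (h := fun x => e x + x) p ((he' p hp).add (hasDerivAt_id' p))).sub
      (hasDerivAt_id' p)
  · exact sub_nonneg.2 <| (one_le_inv_mul₀ (he'₀ _ (hu p hp))).2 <|
      hle p _ hp (e.apply_symm_apply _)

/-- For `1 < q* ≤ 3`, the map `F p = h_{q*}⁻¹(h_{q*}(p) + p) - p`, with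
`h_{q*}(p) = p + |p|^{q*-1} sgn p`, is monotonically increasing on `ℝ`. -/
theorem stmt_16 (qs : ℝ) (hqs1 : 1 < qs) (hqs3 : qs ≤ 3) :
    letI h := fun p : ℝ => p + |p| ^ (qs - 1) * Real.sign p
    Monotone (fun p : ℝ => Function.invFun h (h p + p) - p) := by
  have ha : 0 < qs - 1 := by linarith
  let e := StrictMono.orderIsoOfSurjective _ (strictMono_add_signedRpow ha)
    (surjective_add_signedRpow ha)
  show Monotone fun p => invFun e (e p + p) - p
  have hinv : invFun e = e.symm :=
    (strictMono_add_signedRpow ha).invFun_eq_orderIsoOfSurjective_symm _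
  rw [hinv]
  exact e.monotone_symm_add_self_sub (e' := fun p => 1 + (qs - 1) * |p| ^ (qs - 1 - 1))
    (show 0 + signedRpow _ 0 = 0 by rw [signedRpow_zero, add_zero])
    (fun p hp => (hasDerivAt_id' p).add (hasDerivAt_signedRpow hp))
    (fun p _ => by positivity)
    (fun p u hp h => by
      linarith [mul_abs_rpow_sub_one_le_of_add_signedRpow_eq ha (by linarith) hp h])
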